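/- Let I be a real-valued function on real populations that is scale-invariant (I(tP) = I(P) for every real t > 0 and every real population P), and let J be a real-valued function on real populations that is additive and positively homogeneous (J(P + Q) = J(P) + J(Q) and J(tP) = tJ(P) for t > 0). Let D be a real population with |D| = 1, and assume that for every real population Q, (I(D + tQ) − I(D))/t → J(Q) as t → 0⁺. Let Z₀ be a population with Z₀ = |Z₀|·D. Define V(X) = Tot(X) − I(X)·|X| on populations, and define f(w) = w − J(1_w) − I(D), where 1_w is the population with a single welfare subject at level w. Then for all populations X and Y with Σ_w X(w)·f(w) > Σ_w Y(w)·f(w), there exists N ∈ ℕ such that V(X + n·Z₀) > V(Y + n·Z₀) for every integer n ≥ N. -/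

import Mathlib

/-- The size of a population: total number of welfare subjects. -/
noncomputable def psize (X : ℝ →₀ ℕ) : ℕ := X.sum fun _ n => n

/-- Total welfare of a population. -/
noncomputable def ptot (X : ℝ →₀ ℕ) : ℝ := X.sum fun w n => (n : ℝ) * w

/-- Average welfare of a population. -/
noncomputable def pavg (X : ℝ →₀ ℕ) : ℝ := ptot X / (psize X : ℝ)

/-- A real population: finitely supported, nonzero, with non-negative real values. -/
def IsRealPop (P : ℝ →₀ ℝ) : Prop := P ≠ 0 ∧ ∀ w, 0 ≤ P w

/-- View an (integer) population as a real population. -/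
noncomputable def toRealPop (X : ℝ →₀ ℕ) : ℝ →₀ ℝ :=
  Finsupp.mapRange (fun n : ℕ => (n : ℝ)) (by simp) X

/-- Size of a real population. -/
noncomputable def rsize (P : ℝ →₀ ℝ) : ℝ := P.sum fun _ x => x

/-- Total welfare of a real population. -/
noncomputable def rtot (P : ℝ →₀ ℝ) : ℝ := P.sum fun w x => x * w

/-- Average welfare of a real population. -/
noncomputable def ravg (P : ℝ →₀ ℝ) : ℝ := rtot P / rsize P

/-!
Since `Z₀` consists of `|Z₀|` copies of `D`, the population `X + n • Z₀` is the positive multiple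
`s • (D + s⁻¹ • X)` with `s = n |Z₀|`, so scale invariance gives `I (X + n • Z₀) = I (D + s⁻¹ • X)`.
Expanding to first order in `s⁻¹ → 0⁺` with the directional derivative `J` yields
`V (X + n • Z₀) = s (Tot D - I D) + Σ X f + o(1)`. The leading term does not depend on `X`, so
`V (X + n • Z₀) - V (Y + n • Z₀) → Σ X f - Σ Y f > 0`.
-/

open Filter Topology Set

lemma toRealPop_apply (X : ℝ →₀ ℕ) (w : ℝ) : toRealPop X w = X w := by
  simp [toRealPop]

lemma toRealPop_add (X Y : ℝ →₀ ℕ) : toRealPop (X + Y) = toRealPop X + toRealPop Y := by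
  ext w; simp [toRealPop_apply]

lemma toRealPop_nsmul (n : ℕ) (X : ℝ →₀ ℕ) : toRealPop (n • X) = (n : ℝ) • toRealPop X := by
  ext w; simp [toRealPop_apply]

lemma toRealPop_single (w : ℝ) (n : ℕ) :
    toRealPop (Finsupp.single w n) = (n : ℝ) • Finsupp.single w (1 : ℝ) := by
  ext v; simp [toRealPop_apply, Finsupp.single_apply]

lemma psize_eq_degree (X : ℝ →₀ ℕ) : psize X = X.degree := rfl

lemma psize_pos {X : ℝ →₀ ℕ} (hX : X ≠ 0) : 0 < psize X := by
  rw [psize_eq_degree]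
  exact Nat.pos_of_ne_zero ((Finsupp.degree_eq_zero_iff X).not.mpr hX)

lemma psize_add_nsmul (X Y : ℝ →₀ ℕ) (n : ℕ) : psize (X + n • Y) = psize X + n * psize Y := by
  simp only [psize_eq_degree, map_add, map_nsmul, smul_eq_mul]

lemma rtot_add (P Q : ℝ →₀ ℝ) : rtot (P + Q) = rtot P + rtot Q :=
  Finsupp.sum_add_index' (by simp) (by intros; ring)

lemma rtot_smul (a : ℝ) (P : ℝ →₀ ℝ) : rtot (a • P) = a * rtot P := by
  rw [rtot, Finsupp.sum_smul_index (by simp), rtot, Finsupp.mul_sum]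
  simp only [mul_assoc]

lemma rtot_toRealPop (X : ℝ →₀ ℕ) : rtot (toRealPop X) = ptot X := by
  rw [rtot, toRealPop, Finsupp.sum_mapRange_index (by simp)]
  rfl

lemma IsRealPop.add_of_nonneg {P Q : ℝ →₀ ℝ} (hP : IsRealPop P) (hQ : ∀ w, 0 ≤ Q w) :
    IsRealPop (P + Q) := by
  refine ⟨fun h => hP.1 ?_, fun w => add_nonneg (hP.2 w) (hQ w)⟩
  ext w
  have hw : P w + Q w = 0 := by simpa using congrArg (· w) h
  simp only [Finsupp.coe_zero, Pi.zero_apply]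
  linarith [hP.2 w, hQ w]

lemma isRealPop_toRealPop {X : ℝ →₀ ℕ} (hX : X ≠ 0) : IsRealPop (toRealPop X) := by
  refine ⟨fun h => hX ?_, fun w => by simp [toRealPop_apply]⟩
  ext w
  simpa [toRealPop_apply] using congrArg (· w) h

lemma isRealPop_single (w : ℝ) : IsRealPop (Finsupp.single w (1 : ℝ)) :=
  ⟨by simp, fun v => by rw [Finsupp.single_apply]; split_ifs <;> norm_num⟩

lemma apply_toRealPop_eq_sum_single (J : (ℝ →₀ ℝ) → ℝ)
    (hJadd : ∀ P Q : ℝ →₀ ℝ, IsRealPop P → IsRealPop Q → J (P + Q) = J P + J Q)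
    (hJhom : ∀ t : ℝ, t > 0 → ∀ P : ℝ →₀ ℝ, IsRealPop P → J (t • P) = t * J P)
    {X : ℝ →₀ ℕ} (hX : X ≠ 0) :
    J (toRealPop X) = X.sum fun w n => (n : ℝ) * J (Finsupp.single w 1) := by
  induction X using Finsupp.induction with
  | zero => exact absurd rfl hX
  | single_add w n Y _ hn IH =>
    have hsingle : J (toRealPop (Finsupp.single w n)) = n * J (Finsupp.single w 1) := by
      rw [toRealPop_single, hJhom _ (by exact_mod_cast Nat.pos_of_ne_zero hn) _ (isRealPop_single w)]
    rw [Finsupp.sum_add_index' (by simp) (by intros; push_cast; ring),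
      Finsupp.sum_single_index (by simp)]
    by_cases hY : Y = 0
    · simpa [hY] using hsingle
    · rw [toRealPop_add, hJadd _ _ (isRealPop_toRealPop (by simpa using hn))
        (isRealPop_toRealPop hY), hsingle, IH hY]

lemma sum_natCast_mul_sub_sub (X : ℝ →₀ ℕ) (g : ℝ → ℝ) (c : ℝ) :
    X.sum (fun w n => (n : ℝ) * (w - g w - c)) =
      ptot X - X.sum (fun w n => (n : ℝ) * g w) - c * psize X := by
  simp only [ptot, psize, Finsupp.sum, Nat.cast_sum, Finset.mul_sum, ← Finset.sum_sub_distrib]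
  exact Finset.sum_congr rfl fun w _ => by ring

lemma tendsto_comp_inv_atTop_of_tendsto_slope {φ : ℝ → ℝ} {L : ℝ}
    (h : Tendsto (fun t => (φ t - φ 0) / t) (𝓝[>] 0) (𝓝 L)) :
    Tendsto (fun s => φ s⁻¹) atTop (𝓝 (φ 0)) ∧
      Tendsto (fun s => s * (φ s⁻¹ - φ 0)) atTop (𝓝 L) := by
  have hderiv : HasDerivWithinAt φ L (Ioi 0) 0 := by
    rw [hasDerivWithinAt_iff_tendsto_slope' self_notMem_Ioi]
    simpa [slope_fun_def_field] using h
  refine ⟨hderiv.continuousWithinAt.tendsto.comp tendsto_inv_atTop_nhdsGT_zero, ?_⟩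
  refine (h.comp tendsto_inv_atTop_nhdsGT_zero).congr fun s => ?_
  simp only [Function.comp_apply, div_inv_eq_mul, mul_comm]

lemma apply_add_smul_eq_apply_add_inv_smul (I : (ℝ →₀ ℝ) → ℝ)
    (hIscale : ∀ t : ℝ, t > 0 → ∀ P : ℝ →₀ ℝ, IsRealPop P → I (t • P) = I P)
    {D : ℝ →₀ ℝ} (hD : IsRealPop D) {P : ℝ →₀ ℝ} (hP : ∀ w, 0 ≤ P w) {s : ℝ} (hs : 0 < s) :
    I (P + s • D) = I (D + s⁻¹ • P) := by
  have hP' : ∀ w, 0 ≤ (s⁻¹ • P) w := fun w => mul_nonneg (inv_nonneg.2 hs.le) (hP w)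
  rw [← hIscale s hs _ (hD.add_of_nonneg hP'), smul_add, smul_smul, mul_inv_cancel₀ hs.ne',
    one_smul, add_comm]

lemma toRealPop_add_nsmul {D : ℝ →₀ ℝ} {Z₀ : ℝ →₀ ℕ} (hZ₀D : toRealPop Z₀ = (psize Z₀ : ℝ) • D)
    (W : ℝ →₀ ℕ) (n : ℕ) :
    toRealPop (W + n • Z₀) = toRealPop W + ((n : ℝ) * psize Z₀) • D := by
  rw [toRealPop_add, toRealPop_nsmul, hZ₀D, smul_smul]

lemma ptot_add_nsmul {D : ℝ →₀ ℝ} {Z₀ : ℝ →₀ ℕ} (hZ₀D : toRealPop Z₀ = (psize Z₀ : ℝ) • D)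
    (W : ℝ →₀ ℕ) (n : ℕ) :
    ptot (W + n • Z₀) = ptot W + (n : ℝ) * psize Z₀ * rtot D := by
  rw [← rtot_toRealPop, toRealPop_add_nsmul hZ₀D, rtot_add, rtot_smul, rtot_toRealPop]

lemma tendsto_V_add_nsmul_sub (I J : (ℝ →₀ ℝ) → ℝ)
    (hIscale : ∀ t : ℝ, t > 0 → ∀ P : ℝ →₀ ℝ, IsRealPop P → I (t • P) = I P)
    {D : ℝ →₀ ℝ} (hD : IsRealPop D)
    (hderiv : ∀ Q : ℝ →₀ ℝ, IsRealPop Q →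
      Tendsto (fun t : ℝ => (I (D + t • Q) - I D) / t) (𝓝[>] 0) (𝓝 (J Q)))
    {Z₀ : ℝ →₀ ℕ} (hZ₀ : Z₀ ≠ 0) (hZ₀D : toRealPop Z₀ = (psize Z₀ : ℝ) • D)
    {V : (ℝ →₀ ℕ) → ℝ} (hV : ∀ X : ℝ →₀ ℕ, V X = ptot X - I (toRealPop X) * (psize X : ℝ))
    {W : ℝ →₀ ℕ} (hW : W ≠ 0) :
    Tendsto (fun n : ℕ => V (W + n • Z₀) - n * psize Z₀ * (rtot D - I D)) atTop
      (𝓝 (ptot W - psize W * I D - J (toRealPop W))) := by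
  obtain ⟨hcont, hslope⟩ := tendsto_comp_inv_atTop_of_tendsto_slope
    (φ := fun t => I (D + t • toRealPop W)) (by simpa using hderiv _ (isRealPop_toRealPop hW))
  simp only [zero_smul, add_zero] at hcont hslope
  have hs : Tendsto (fun n : ℕ => (n : ℝ) * psize Z₀) atTop atTop :=
    tendsto_natCast_atTop_atTop.atTop_mul_const (by exact_mod_cast psize_pos hZ₀)
  refine (((tendsto_const_nhds.sub (tendsto_const_nhds.mul hcont)).sub hslope).comp hs).congr' ?_
  filter_upwards [hs.eventually_gt_atTop 0] with n hn
  have hI := apply_add_smul_eq_apply_add_inv_smul I hIscale hD (P := toRealPop W)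
    (fun w => by simp [toRealPop_apply]) hn
  rw [Function.comp_apply, hV, toRealPop_add_nsmul hZ₀D, hI, ptot_add_nsmul hZ₀D, psize_add_nsmul]
  push_cast
  ring

theorem stmt_8_general (I J : (ℝ →₀ ℝ) → ℝ)
    (hIscale : ∀ t : ℝ, t > 0 → ∀ P : ℝ →₀ ℝ, IsRealPop P → I (t • P) = I P)
    (hJadd : ∀ P Q : ℝ →₀ ℝ, IsRealPop P → IsRealPop Q → J (P + Q) = J P + J Q)
    (hJhom : ∀ t : ℝ, t > 0 → ∀ P : ℝ →₀ ℝ, IsRealPop P → J (t • P) = t * J P)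
    (D : ℝ →₀ ℝ) (hD : IsRealPop D)
    (hderiv : ∀ Q : ℝ →₀ ℝ, IsRealPop Q →
      Filter.Tendsto (fun t : ℝ => (I (D + t • Q) - I D) / t)
        (nhdsWithin 0 (Set.Ioi 0)) (nhds (J Q)))
    (Z₀ : ℝ →₀ ℕ) (hZ₀ : Z₀ ≠ 0) (hZ₀D : toRealPop Z₀ = (psize Z₀ : ℝ) • D)
    (V : (ℝ →₀ ℕ) → ℝ)
    (hV : ∀ X : ℝ →₀ ℕ, V X = ptot X - I (toRealPop X) * (psize X : ℝ))
    (f : ℝ → ℝ)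
    (hf : ∀ w : ℝ, f w = w - J (Finsupp.single w (1 : ℝ)) - I D)
    (X Y : ℝ →₀ ℕ) (hX : X ≠ 0) (hY : Y ≠ 0)
    (hfsum : X.sum (fun w n => (n : ℝ) * f w) > Y.sum (fun w n => (n : ℝ) * f w)) :
    ∃ N : ℕ, ∀ n : ℕ, n ≥ N → V (X + n • Z₀) > V (Y + n • Z₀) := by
  have hf_sum : ∀ W : ℝ →₀ ℕ, W ≠ 0 →
      W.sum (fun w n => (n : ℝ) * f w) = ptot W - psize W * I D - J (toRealPop W) := by
    intro W hW
    simp only [hf, sum_natCast_mul_sub_sub, ← apply_toRealPop_eq_sum_single J hJadd hJhom hW]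
    ring
  rw [hf_sum X hX, hf_sum Y hY] at hfsum
  have hlim := fun W (hW : W ≠ 0) => tendsto_V_add_nsmul_sub I J hIscale hD hderiv hZ₀ hZ₀D hV hW
  obtain ⟨N, hN⟩ := eventually_atTop.1
    (((hlim X hX).sub (hlim Y hY)).eventually (eventually_gt_nhds (sub_pos.2 hfsum)))
  exact ⟨N, fun n hn => by linarith [hN n hn]⟩

theorem stmt_8 (I J : (ℝ →₀ ℝ) → ℝ)
    (hIscale : ∀ t : ℝ, t > 0 → ∀ P : ℝ →₀ ℝ, IsRealPop P → I (t • P) = I P)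
    (hJadd : ∀ P Q : ℝ →₀ ℝ, IsRealPop P → IsRealPop Q → J (P + Q) = J P + J Q)
    (hJhom : ∀ t : ℝ, t > 0 → ∀ P : ℝ →₀ ℝ, IsRealPop P → J (t • P) = t * J P)
    (D : ℝ →₀ ℝ) (hD : IsRealPop D) (hDsize : rsize D = 1)
    (hderiv : ∀ Q : ℝ →₀ ℝ, IsRealPop Q →
      Filter.Tendsto (fun t : ℝ => (I (D + t • Q) - I D) / t)
        (nhdsWithin 0 (Set.Ioi 0)) (nhds (J Q)))
    (Z₀ : ℝ →₀ ℕ) (hZ₀ : Z₀ ≠ 0) (hZ₀D : toRealPop Z₀ = (psize Z₀ : ℝ) • D)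
    (V : (ℝ →₀ ℕ) → ℝ)
    (hV : ∀ X : ℝ →₀ ℕ, V X = ptot X - I (toRealPop X) * (psize X : ℝ))
    (f : ℝ → ℝ)
    (hf : ∀ w : ℝ, f w = w - J (Finsupp.single w (1 : ℝ)) - I D)
    (X Y : ℝ →₀ ℕ) (hX : X ≠ 0) (hY : Y ≠ 0)
    (hfsum : X.sum (fun w n => (n : ℝ) * f w) > Y.sum (fun w n => (n : ℝ) * f w)) :
    ∃ N : ℕ, ∀ n : ℕ, n ≥ N → V (X + n • Z₀) > V (Y + n • Z₀) :=
  stmt_8_general I J hIscale hJadd hJhom D hD hderiv Z₀ hZ₀ hZ₀D V hV f hf X Y hX hY hfsum
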